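/- arXiv:2104.06069 — 5 statements merged into one kernel-verified Lean document; each statement's English description precedes it below -/
import Mathlib

section
/- Let ρ ∈ [0,1) and let {b_t}_{t≥1} be a sequence of nonnegative real numbers. Then for every k ≥ 1, Σ_{t=1}^k (Σ_{s=1}^t ρ^{t−s} b_s)² ≤ (1/(1−ρ)) · Σ_{t=1}^k Σ_{s=1}^t ρ^{t−s} b_s². -/
/-!
For each `t`, the weighted Cauchy–Schwarz inequality with weights `ρ^(t-s)` bounds the squared
convolution by the total weight times the weighted sum of squares, and the total weight is a
partial geometric sum, hence at most `1/(1-ρ)`.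
-/

open Finset

theorem Finset.sq_sum_mul_le_sum_mul_sum_mul_sq {ι R : Type*} [CommSemiring R] [LinearOrder R]
    [IsStrictOrderedRing R] [ExistsAddOfLE R] (s : Finset ι) {w : ι → R} (f : ι → R)
    (hw : ∀ i ∈ s, 0 ≤ w i) :
    (∑ i ∈ s, w i * f i) ^ 2 ≤ (∑ i ∈ s, w i) * ∑ i ∈ s, w i * f i ^ 2 :=
  sum_sq_le_sum_mul_sum_of_sq_le_mul s hw (fun i hi ↦ mul_nonneg (hw i hi) (sq_nonneg _))
    fun _ _ ↦ (by ring : _ = _).le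

theorem Finset.sum_Icc_pow_sub_eq_geom_sum {R : Type*} [CommSemiring R] (x : R) (t : ℕ) :
    ∑ s ∈ Icc 1 t, x ^ (t - s) = ∑ j ∈ range t, x ^ j := by
  rw [← sum_range_reflect, ← Ico_add_one_right_eq_Icc, sum_Ico_eq_sum_range]
  exact sum_congr rfl fun j hj ↦ by rw [mem_range] at hj; congr 1; omega

theorem Finset.sum_Icc_pow_sub_le_one_div_one_sub {K : Type*} [Field K] [LinearOrder K]
    [IsStrictOrderedRing K] {x : K} (hx0 : 0 ≤ x) (hx1 : x < 1) (t : ℕ) :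
    ∑ s ∈ Icc 1 t, x ^ (t - s) ≤ 1 / (1 - x) := by
  rw [sum_Icc_pow_sub_eq_geom_sum, range_eq_Ico]
  simpa using geom_sum_Ico_le_of_lt_one (m := 0) (n := t) hx0 hx1

theorem sq_sum_geometric_convolution_le_general
    (ρ : ℝ) (hρ0 : 0 ≤ ρ) (hρ1 : ρ < 1)
    (b : ℕ → ℝ)
    (k : ℕ) :
    ∑ t ∈ Icc 1 k, (∑ s ∈ Icc 1 t, ρ ^ (t - s) * b s) ^ 2
      ≤ (1 / (1 - ρ)) * ∑ t ∈ Icc 1 k, ∑ s ∈ Icc 1 t, ρ ^ (t - s) * (b s) ^ 2 := by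
  rw [mul_sum]
  gcongr with t
  calc (∑ s ∈ Icc 1 t, ρ ^ (t - s) * b s) ^ 2
      ≤ (∑ s ∈ Icc 1 t, ρ ^ (t - s)) * ∑ s ∈ Icc 1 t, ρ ^ (t - s) * b s ^ 2 :=
        sq_sum_mul_le_sum_mul_sum_mul_sq _ b fun _ _ ↦ pow_nonneg hρ0 _
    _ ≤ (1 / (1 - ρ)) * ∑ s ∈ Icc 1 t, ρ ^ (t - s) * b s ^ 2 := by
        gcongr
        exact sum_Icc_pow_sub_le_one_div_one_sub hρ0 hρ1 t

/-- **Key intermediate step of the sequence lemma.** If `ρ ∈ [0,1)` and `{b_t}_{t≥1}` is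
nonnegative, then
`∑_{t=1}^k (∑_{s=1}^t ρ^(t-s) b_s)² ≤ (1/(1-ρ)) ∑_{t=1}^k ∑_{s=1}^t ρ^(t-s) b_s²`. -/
theorem sq_sum_geometric_convolution_le
    (ρ : ℝ) (hρ0 : 0 ≤ ρ) (hρ1 : ρ < 1)
    (b : ℕ → ℝ) (hb : ∀ t, 1 ≤ t → 0 ≤ b t)
    (k : ℕ) (hk : 1 ≤ k) :
    ∑ t ∈ Icc 1 k, (∑ s ∈ Icc 1 t, ρ ^ (t - s) * b s) ^ 2
      ≤ (1 / (1 - ρ)) * ∑ t ∈ Icc 1 k, ∑ s ∈ Icc 1 t, ρ ^ (t - s) * (b s) ^ 2 :=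
  sq_sum_geometric_convolution_le_general ρ hρ0 hρ1 b k
end

section
/- Let E be a real normed vector space, let β ∈ [0,1), and let u_0, u_1, …, u_T ∈ E. Then Σ_{t=0}^T ‖Σ_{s=0}^t β^{t−s} u_s‖² ≤ (1/(1−β)²) · Σ_{s=0}^T ‖u_s‖². -/
/-!
The triangle inequality reduces the claim to the scalar sequence `b s = ‖u s‖`. There the
geometric convolution is the lower-triangular matrix `(β ^ (t - s))_{s ≤ t}`, whose row and column
sums are partial geometric sums, hence at most `1 / (1 - β)`; the Schur test (Cauchy–Schwarz in
each row, then exchanging the order of summation) turns these two bounds into the factor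
`1 / (1 - β) ^ 2`.
-/

open Finset

/-- The Schur test. -/
theorem sum_sq_sum_mul_le_of_row_col_sum_le {ι κ : Type*} (s : Finset ι) (t : Finset κ)
    (K : ι → κ → ℝ) (hK : ∀ i ∈ s, ∀ j ∈ t, 0 ≤ K i j) {A B : ℝ} (hA : 0 ≤ A)
    (hrow : ∀ i ∈ s, ∑ j ∈ t, K i j ≤ A) (hcol : ∀ j ∈ t, ∑ i ∈ s, K i j ≤ B) (b : κ → ℝ) :
    ∑ i ∈ s, (∑ j ∈ t, K i j * b j) ^ 2 ≤ A * B * ∑ j ∈ t, b j ^ 2 := by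
  have hrow_sq : ∀ i ∈ s, (∑ j ∈ t, K i j * b j) ^ 2 ≤ A * ∑ j ∈ t, K i j * b j ^ 2 := by
    intro i hi
    have hKb : 0 ≤ ∑ j ∈ t, K i j * b j ^ 2 :=
      sum_nonneg fun j hj => mul_nonneg (hK i hi j hj) (sq_nonneg _)
    calc (∑ j ∈ t, K i j * b j) ^ 2
        ≤ (∑ j ∈ t, K i j) * ∑ j ∈ t, K i j * b j ^ 2 :=
          sum_sq_le_sum_mul_sum_of_sq_le_mul t (hK i hi)
            (fun j hj => mul_nonneg (hK i hi j hj) (sq_nonneg _)) fun j _ => le_of_eq (by ring)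
      _ ≤ A * ∑ j ∈ t, K i j * b j ^ 2 := mul_le_mul_of_nonneg_right (hrow i hi) hKb
  calc ∑ i ∈ s, (∑ j ∈ t, K i j * b j) ^ 2
      ≤ ∑ i ∈ s, A * ∑ j ∈ t, K i j * b j ^ 2 := sum_le_sum hrow_sq
    _ = A * ∑ j ∈ t, (∑ i ∈ s, K i j) * b j ^ 2 := by
      rw [← mul_sum, sum_comm]; simp only [sum_mul]
    _ ≤ A * ∑ j ∈ t, B * b j ^ 2 :=
      mul_le_mul_of_nonneg_left
        (sum_le_sum fun j hj => mul_le_mul_of_nonneg_right (hcol j hj) (sq_nonneg _)) hA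
    _ = A * B * ∑ j ∈ t, b j ^ 2 := by rw [← mul_sum, mul_assoc]

theorem sum_range_succ_eq_sum_range_ite {M : Type*} [AddCommMonoid M] {t T : ℕ} (ht : t ≤ T)
    (f : ℕ → M) : ∑ s ∈ range (t + 1), f s = ∑ s ∈ range (T + 1), if s ≤ t then f s else 0 := by
  rw [← sum_filter]
  congr 1
  ext
  simp only [mem_range, mem_filter]
  omega

theorem sum_range_pow_le_one_div_one_sub {β : ℝ} (hβ0 : 0 ≤ β) (hβ1 : β < 1) (n : ℕ) :
    ∑ k ∈ range n, β ^ k ≤ 1 / (1 - β) := by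
  simpa using geom_sum_Ico_le_of_lt_one (m := 0) (n := n) hβ0 hβ1

theorem sum_range_succ_pow_sub_le {β : ℝ} (hβ0 : 0 ≤ β) (hβ1 : β < 1) (t : ℕ) :
    ∑ s ∈ range (t + 1), β ^ (t - s) ≤ 1 / (1 - β) := by
  have hreflect := sum_range_reflect (β ^ ·) (t + 1)
  simp only [add_tsub_cancel_right] at hreflect
  rw [hreflect]
  exact sum_range_pow_le_one_div_one_sub hβ0 hβ1 (t + 1)

theorem sum_range_ite_pow_sub_le {β : ℝ} (hβ0 : 0 ≤ β) (hβ1 : β < 1) (s T : ℕ) :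
    ∑ t ∈ range (T + 1), (if s ≤ t then β ^ (t - s) else 0) ≤ 1 / (1 - β) := by
  have hIco : (range (T + 1)).filter (s ≤ ·) = Ico s (T + 1) := by
    ext
    simp only [mem_filter, mem_range, mem_Ico]
    omega
  rw [← sum_filter, hIco, sum_Ico_eq_sum_range]
  simpa using sum_range_pow_le_one_div_one_sub hβ0 hβ1 (T + 1 - s)

theorem sum_sq_geometric_convolution_le {β : ℝ} (hβ0 : 0 ≤ β) (hβ1 : β < 1) (T : ℕ)
    (b : ℕ → ℝ) :
    ∑ t ∈ range (T + 1), (∑ s ∈ range (t + 1), β ^ (t - s) * b s) ^ 2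
      ≤ 1 / (1 - β) ^ 2 * ∑ s ∈ range (T + 1), b s ^ 2 := by
  have hlower : ∀ t ∈ range (T + 1), ∑ s ∈ range (t + 1), β ^ (t - s) * b s
      = ∑ s ∈ range (T + 1), (if s ≤ t then β ^ (t - s) else 0) * b s := by
    intro t ht
    rw [sum_range_succ_eq_sum_range_ite (Nat.lt_succ_iff.1 (mem_range.1 ht))]
    simp only [ite_mul, zero_mul]
  rw [sum_congr rfl fun t ht => by rw [hlower t ht], sq, ← one_div_mul_one_div]
  refine sum_sq_sum_mul_le_of_row_col_sum_le _ _ _ (fun t _ s _ => ?_)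
    (one_div_nonneg.2 (sub_nonneg.2 hβ1.le)) (fun t ht => ?_) (fun s _ => ?_) b
  · split_ifs <;> positivity
  · rw [← sum_range_succ_eq_sum_range_ite (Nat.lt_succ_iff.1 (mem_range.1 ht))]
    exact sum_range_succ_pow_sub_le hβ0 hβ1 t
  · exact sum_range_ite_pow_sub_le hβ0 hβ1 s T

/-- **Vector-valued sequence lemma.** For a real normed vector space `E`, `β ∈ [0,1)` and
`u_0, …, u_T ∈ E`, one has
`∑_{t=0}^T ‖∑_{s=0}^t β^(t-s) u_s‖² ≤ (1/(1-β)²) ∑_{s=0}^T ‖u_s‖²`. -/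
theorem sum_sq_norm_geometric_convolution_le
    {E : Type*} [NormedAddCommGroup E] [NormedSpace ℝ E]
    (β : ℝ) (hβ0 : 0 ≤ β) (hβ1 : β < 1) (T : ℕ) (u : ℕ → E) :
    ∑ t ∈ range (T + 1), ‖∑ s ∈ range (t + 1), β ^ (t - s) • u s‖ ^ 2
      ≤ (1 / (1 - β) ^ 2) * ∑ s ∈ range (T + 1), ‖u s‖ ^ 2 := by
  have hnorm (t : ℕ) : ‖∑ s ∈ range (t + 1), β ^ (t - s) • u s‖
      ≤ ∑ s ∈ range (t + 1), β ^ (t - s) * ‖u s‖ :=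
    (norm_sum_le _ _).trans_eq
      (sum_congr rfl fun s _ => norm_smul_of_nonneg (pow_nonneg hβ0 _) _)
  calc ∑ t ∈ range (T + 1), ‖∑ s ∈ range (t + 1), β ^ (t - s) • u s‖ ^ 2
      ≤ ∑ t ∈ range (T + 1), (∑ s ∈ range (t + 1), β ^ (t - s) * ‖u s‖) ^ 2 :=
        sum_le_sum fun t _ => pow_le_pow_left₀ (norm_nonneg _) (hnorm t) 2
    _ ≤ (1 / (1 - β) ^ 2) * ∑ s ∈ range (T + 1), ‖u s‖ ^ 2 :=
        sum_sq_geometric_convolution_le hβ0 hβ1 T fun s => ‖u s‖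
end

section
/- Let E be a real normed vector space, let β ∈ [0,1), and let δ_{−1}, δ_0, δ_1, …, δ_T ∈ E with δ_{−1} = 0. Then Σ_{t=0}^T ‖Σ_{s=0}^t β^{t−s} (δ_{s−1} − δ_s)‖² ≤ (4/(1−β)²) · Σ_{s=0}^T ‖δ_s‖². -/
open Finset

/-! Writing `u_t = ∑_{s ≤ t} β^(t-s) δ_{s-1} - ∑_{s ≤ t} β^(t-s) δ_s`, it suffices to bound each
convolution separately, losing a factor `2` from `‖x - y‖² ≤ 2 (‖x‖² + ‖y‖²)`. Each is a truncated
causal convolution of `‖δ‖` with the kernel `β^i` of total mass at most `1/(1-β)`, so Young's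
inequality `‖w * a‖₂ ≤ ‖w‖₁ ‖a‖₂` bounds it by `(1-β)⁻² ∑ ‖δ_s‖²`; the shifted sequence has no
larger `ℓ²` norm because `δ_{-1} = 0`. -/

lemma norm_sub_sq_le {E : Type*} [SeminormedAddGroup E] (x y : E) :
    ‖x - y‖ ^ 2 ≤ 2 * (‖x‖ ^ 2 + ‖y‖ ^ 2) :=
  (pow_le_pow_left₀ (norm_nonneg _) (norm_sub_le x y) 2).trans add_sq_le

lemma sum_range_geometric_le {β : ℝ} (hβ0 : 0 ≤ β) (hβ1 : β < 1) (n : ℕ) :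
    ∑ i ∈ range n, β ^ i ≤ 1 / (1 - β) := by
  have h := geom_sum_Ico_le_of_lt_one (m := 0) (n := n) hβ0 hβ1
  rwa [← range_eq_Ico, pow_zero] at h

lemma sum_range_comp_sub_one_le {g : ℤ → ℝ} (hg : ∀ i : ℕ, 0 ≤ g i) (hg0 : g (-1) = 0)
    (n : ℕ) : ∑ s ∈ range n, g ((s : ℤ) - 1) ≤ ∑ s ∈ range n, g s := by
  cases n with
  | zero => simp
  | succ m =>
    rw [sum_range_succ', sum_range_succ]
    push_cast
    simp only [add_sub_cancel_right, hg0, add_zero]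
    linarith [hg m]

section CausalConvolution

variable {w : ℕ → ℝ} {C : ℝ}

lemma sq_sum_kernel_mul_le (hw : ∀ i, 0 ≤ w i) (hC : ∀ n, ∑ i ∈ range n, w i ≤ C)
    (a : ℕ → ℝ) (t : ℕ) :
    (∑ s ∈ range (t + 1), w (t - s) * a s) ^ 2
      ≤ C * ∑ s ∈ range (t + 1), w (t - s) * a s ^ 2 := by
  have hmass : ∑ s ∈ range (t + 1), w (t - s) ≤ C := by
    have h := sum_range_reflect w (t + 1)
    rw [add_tsub_cancel_right] at h
    exact h ▸ hC (t + 1)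
  calc (∑ s ∈ range (t + 1), w (t - s) * a s) ^ 2
      ≤ (∑ s ∈ range (t + 1), w (t - s)) * ∑ s ∈ range (t + 1), w (t - s) * a s ^ 2 :=
        sum_sq_le_sum_mul_sum_of_sq_le_mul _ (fun _ _ => hw _)
          (fun _ _ => mul_nonneg (hw _) (sq_nonneg _)) (fun _ _ => le_of_eq (by ring))
    _ ≤ C * ∑ s ∈ range (t + 1), w (t - s) * a s ^ 2 :=
        mul_le_mul_of_nonneg_right hmass (sum_nonneg fun _ _ => mul_nonneg (hw _) (sq_nonneg _))

lemma sum_sum_kernel_mul_le (hC : ∀ n, ∑ i ∈ range n, w i ≤ C) {b : ℕ → ℝ}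
    (hb : ∀ s, 0 ≤ b s) (T : ℕ) :
    ∑ t ∈ range (T + 1), ∑ s ∈ range (t + 1), w (t - s) * b s
      ≤ C * ∑ s ∈ range (T + 1), b s := by
  have hswap : ∑ t ∈ range (T + 1), ∑ s ∈ range (t + 1), w (t - s) * b s
      = ∑ s ∈ range (T + 1), (∑ k ∈ range (T + 1 - s), w k) * b s := by
    simp only [← Nat.Ico_zero_eq_range]
    rw [← sum_Ico_Ico_comm]
    refine sum_congr rfl fun s _ => ?_
    rw [sum_Ico_eq_sum_range, sum_mul]
    simp only [Nat.add_sub_cancel_left, Nat.Ico_zero_eq_range]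
  rw [hswap, mul_sum]
  exact sum_le_sum fun s _ => mul_le_mul_of_nonneg_right (hC _) (hb s)

lemma sum_sq_sum_kernel_mul_le (hw : ∀ i, 0 ≤ w i) (hC : ∀ n, ∑ i ∈ range n, w i ≤ C)
    (a : ℕ → ℝ) (T : ℕ) :
    ∑ t ∈ range (T + 1), (∑ s ∈ range (t + 1), w (t - s) * a s) ^ 2
      ≤ C ^ 2 * ∑ s ∈ range (T + 1), a s ^ 2 := by
  have hC0 : 0 ≤ C := by simpa using hC 0
  calc ∑ t ∈ range (T + 1), (∑ s ∈ range (t + 1), w (t - s) * a s) ^ 2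
      ≤ ∑ t ∈ range (T + 1), C * ∑ s ∈ range (t + 1), w (t - s) * a s ^ 2 :=
        sum_le_sum fun t _ => sq_sum_kernel_mul_le hw hC a t
    _ = C * ∑ t ∈ range (T + 1), ∑ s ∈ range (t + 1), w (t - s) * a s ^ 2 := by
        rw [mul_sum]
    _ ≤ C * (C * ∑ s ∈ range (T + 1), a s ^ 2) :=
        mul_le_mul_of_nonneg_left (sum_sum_kernel_mul_le hC (fun s => sq_nonneg (a s)) T) hC0
    _ = C ^ 2 * ∑ s ∈ range (T + 1), a s ^ 2 := by ring

lemma sum_sq_norm_sum_kernel_smul_le {E : Type*} [SeminormedAddCommGroup E] [NormedSpace ℝ E]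
    (hw : ∀ i, 0 ≤ w i) (hC : ∀ n, ∑ i ∈ range n, w i ≤ C) (f : ℕ → E) (T : ℕ) :
    ∑ t ∈ range (T + 1), ‖∑ s ∈ range (t + 1), w (t - s) • f s‖ ^ 2
      ≤ C ^ 2 * ∑ s ∈ range (T + 1), ‖f s‖ ^ 2 := by
  have hnorm (t : ℕ) :
      ‖∑ s ∈ range (t + 1), w (t - s) • f s‖ ≤ ∑ s ∈ range (t + 1), w (t - s) * ‖f s‖ := by
    refine (norm_sum_le _ _).trans (sum_le_sum fun s _ => ?_)
    rw [norm_smul, Real.norm_of_nonneg (hw _)]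
  calc ∑ t ∈ range (T + 1), ‖∑ s ∈ range (t + 1), w (t - s) • f s‖ ^ 2
      ≤ ∑ t ∈ range (T + 1), (∑ s ∈ range (t + 1), w (t - s) * ‖f s‖) ^ 2 :=
        sum_le_sum fun t _ => pow_le_pow_left₀ (norm_nonneg _) (hnorm t) 2
    _ ≤ C ^ 2 * ∑ s ∈ range (T + 1), ‖f s‖ ^ 2 :=
        sum_sq_sum_kernel_mul_le hw hC (fun s => ‖f s‖) T

end CausalConvolution

/-- **Accumulated error-compensation differences.** For a real normed vector space `E`,
`β ∈ [0,1)` and `δ_{-1} = 0, δ_0, …, δ_T ∈ E`, one has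
`∑_{t=0}^T ‖∑_{s=0}^t β^(t-s) (δ_{s-1} - δ_s)‖² ≤ (4/(1-β)²) ∑_{s=0}^T ‖δ_s‖²`. -/
theorem sum_sq_norm_geometric_convolution_diff_le
    {E : Type*} [NormedAddCommGroup E] [NormedSpace ℝ E]
    (β : ℝ) (hβ0 : 0 ≤ β) (hβ1 : β < 1) (T : ℕ)
    (δ : ℤ → E) (h0 : δ (-1) = 0) :
    ∑ t ∈ range (T + 1), ‖∑ s ∈ range (t + 1), β ^ (t - s) • (δ ((s : ℤ) - 1) - δ (s : ℤ))‖ ^ 2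
      ≤ (4 / (1 - β) ^ 2) * ∑ s ∈ range (T + 1), ‖δ (s : ℤ)‖ ^ 2 := by
  have young (f : ℕ → E) := sum_sq_norm_sum_kernel_smul_le (fun i => pow_nonneg hβ0 i)
    (sum_range_geometric_le hβ0 hβ1) f T
  have hshift : ∑ s ∈ range (T + 1), ‖δ ((s : ℤ) - 1)‖ ^ 2 ≤ ∑ s ∈ range (T + 1), ‖δ s‖ ^ 2 :=
    sum_range_comp_sub_one_le (g := fun i => ‖δ i‖ ^ 2) (fun _ => sq_nonneg _) (by simp [h0]) _
  simp only [smul_sub, sum_sub_distrib]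
  calc _ ≤ ∑ t ∈ range (T + 1), 2 * (‖∑ s ∈ range (t + 1), β ^ (t - s) • δ ((s : ℤ) - 1)‖ ^ 2
          + ‖∑ s ∈ range (t + 1), β ^ (t - s) • δ s‖ ^ 2) :=
        sum_le_sum fun t _ => norm_sub_sq_le _ _
    _ ≤ 2 * ((1 / (1 - β)) ^ 2 * ∑ s ∈ range (T + 1), ‖δ ((s : ℤ) - 1)‖ ^ 2
          + (1 / (1 - β)) ^ 2 * ∑ s ∈ range (T + 1), ‖δ s‖ ^ 2) := by
        rw [← mul_sum, sum_add_distrib]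
        gcongr
        exacts [young _, young _]
    _ ≤ 2 * ((1 / (1 - β)) ^ 2 * ∑ s ∈ range (T + 1), ‖δ s‖ ^ 2
          + (1 / (1 - β)) ^ 2 * ∑ s ∈ range (T + 1), ‖δ s‖ ^ 2) := by
        gcongr
    _ = (4 / (1 - β) ^ 2) * ∑ s ∈ range (T + 1), ‖δ (s : ℤ)‖ ^ 2 := by
        rw [div_pow, one_pow]
        ring
end

section
/- Let E be a real vector space, let n ≥ 1 be an integer, β ∈ ℝ, and let r ∈ ℝ (the scaling-coefficient ratio c_{t−2}/c_{t−1}). Fix vectors m_t ∈ E, g_t^{(1)}, …, g_t^{(n)} ∈ E, worker errors δ_t^{(1)}, …, δ_t^{(n)} ∈ E, a server error δ_t ∈ E, compressed vectors m̂^{(1)}, …, m̂^{(n)} ∈ E and m_{t+1} ∈ E. Define, for each i, the local momentum m_t^{(i)} := β m_t + (1−β) g_t^{(i)} and the new worker error δ_{t+1}^{(i)} := m_t^{(i)} + r δ_t^{(i)} − m̂^{(i)}; define the server average m_{t+1/2} := (1/n) Σ_{i=1}^n m̂^{(i)} and the new server error δ_{t+1} := m_{t+1/2} + r δ_t − m_{t+1}.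 Then, with δ̄_t := (1/n) Σ_{i=1}^n δ_t^{(i)} + δ_t and δ̄_{t+1} := (1/n) Σ_{i=1}^n δ_{t+1}^{(i)} + δ_{t+1}, it holds that m_{t+1} = β m_t + ((1−β)/n) Σ_{i=1}^n g_t^{(i)} + r δ̄_t − δ̄_{t+1}. -/
/-!
Averaging the new worker errors, the compressed vectors `m̂ᵢ` enter only through their mean
`m_{t+1/2}`, which the new server error cancels; what is left of `δ̄_{t+1}` is
`β mₜ + ((1 - β)/n) ∑ gᵢ + r δ̄ₜ - m_{t+1}`.
-/

open Finset

section Averaging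

variable {𝕜 E ι : Type*} [Field 𝕜] [AddCommGroup E] [Module 𝕜 E] [Fintype ι]

theorem inv_card_smul_sum_const (hcard : (Fintype.card ι : 𝕜) ≠ 0) (v : E) :
    (1 / (Fintype.card ι : 𝕜)) • ∑ _i : ι, v = v := by
  rw [sum_const, card_univ, ← Nat.cast_smul_eq_nsmul 𝕜, smul_smul, one_div,
    inv_mul_cancel₀ hcard, one_smul]

theorem inv_card_smul_sum_worker_error (hcard : (Fintype.card ι : 𝕜) ≠ 0)
    (β r : 𝕜) (m : E) (g δ mhat : ι → E) :
    (1 / (Fintype.card ι : 𝕜)) • ∑ i, (β • m + (1 - β) • g i + r • δ i - mhat i) =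
      β • m + ((1 - β) / Fintype.card ι) • ∑ i, g i
        + r • ((1 / (Fintype.card ι : 𝕜)) • ∑ i, δ i)
        - (1 / (Fintype.card ι : 𝕜)) • ∑ i, mhat i := by
  simp only [sum_sub_distrib, sum_add_distrib, smul_sub, smul_add,
    inv_card_smul_sum_const hcard]
  simp only [← smul_sum, smul_smul]
  module

end Averaging

/-- **Two-level error-compensated compression is one-level.** The worker-then-server
error-compensated compression scheme of 1-bit LAMB is equivalent to an error-compensated
momentum update with aggregated compression error `δ̄_t = (1/n) ∑_i δ_t^{(i)} + δ_t`. -/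
theorem two_level_error_compensation_eq_one_level
    {E : Type*} [AddCommGroup E] [Module ℝ E]
    (n : ℕ) (hn : 1 ≤ n) (β r : ℝ)
    (mt : E) (g δw : Fin n → E) (δs : E) (mhat : Fin n → E) (mnext : E)
    (mloc : Fin n → E) (hmloc : ∀ i, mloc i = β • mt + (1 - β) • g i)
    (δw' : Fin n → E) (hδw' : ∀ i, δw' i = mloc i + r • δw i - mhat i)
    (mhalf : E) (hmhalf : mhalf = ((1 : ℝ) / n) • ∑ i, mhat i)
    (δs' : E) (hδs' : δs' = mhalf + r • δs - mnext)
    (δbar : E) (hδbar : δbar = ((1 : ℝ) / n) • ∑ i, δw i + δs)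
    (δbar' : E) (hδbar' : δbar' = ((1 : ℝ) / n) • ∑ i, δw' i + δs') :
    mnext = β • mt + ((1 - β) / n) • ∑ i, g i + r • δbar - δbar' := by
  have hcard : (Fintype.card (Fin n) : ℝ) ≠ 0 := by
    rw [Fintype.card_fin]; exact Nat.cast_ne_zero.mpr (by omega)
  have hworkers : ((1 : ℝ) / n) • ∑ i, δw' i =
      β • mt + ((1 - β) / n) • ∑ i, g i + r • ((1 / (n : ℝ)) • ∑ i, δw i) - mhalf := by
    simpa only [hδw', hmloc, hmhalf, Fintype.card_fin] using
      inv_card_smul_sum_worker_error hcard β r mt g δw mhat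
  rw [hδbar', hworkers, hδs', hδbar, smul_add]
  abel
end

section
/- Let E be a real normed vector space, β ∈ [0,1), and let g_0, …, g_T ∈ E and δ_{−1} = 0, δ_0, …, δ_T ∈ E. If m_t = (1−β) Σ_{s=0}^t β^{t−s} g_s + Σ_{s=0}^t β^{t−s} (δ_{s−1} − δ_s) for every 0 ≤ t ≤ T, then Σ_{t=0}^T ‖m_t‖² ≤ 2 Σ_{t=0}^T ‖g_t‖² + (8/(1−β)²) Σ_{t=0}^T ‖δ_t‖². -/
/-!
Both sums in `m_t` are causal convolutions with the geometric kernel `k ↦ β ^ k`, whose total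
mass is at most `1 / (1 - β)`. Young's inequality `‖w ⋆ a‖₂ ≤ ‖w‖₁ ‖a‖₂` (Cauchy–Schwarz
against the kernel, then summation by exchanging the order) bounds each convolution in `ℓ²`, and
`‖x + y‖² ≤ 2 ‖x‖² + 2 ‖y‖²` combines the two; the increments `δ_{s-1} - δ_s` cost a factor `4`
in `ℓ²` because `δ_{-1} = 0`.
-/

open Finset

def causalConv (w a : ℕ → ℝ) (t : ℕ) : ℝ := ∑ s ∈ range (t + 1), w (t - s) * a s

section CausalConv

variable {w : ℕ → ℝ} {C : ℝ}

theorem sum_range_causalConv_le (hC : ∀ n, ∑ k ∈ range n, w k ≤ C)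
    {b : ℕ → ℝ} (hb : ∀ s, 0 ≤ b s) (N : ℕ) :
    ∑ t ∈ range N, causalConv w b t ≤ C * ∑ s ∈ range N, b s := by
  have hswap : ∑ t ∈ range N, causalConv w b t
      = ∑ s ∈ range N, (∑ k ∈ range (N - s), w k) * b s := by
    simp_rw [causalConv, range_eq_Ico]
    rw [← sum_Ico_Ico_comm]
    refine sum_congr rfl fun s _ => ?_
    rw [← sum_mul, sum_Ico_eq_sum_range, sum_Ico_eq_sum_range]
    simp only [zero_add, Nat.sub_zero, Nat.add_sub_cancel_left]
  rw [hswap, mul_sum]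
  exact sum_le_sum fun s _ => mul_le_mul_of_nonneg_right (hC _) (hb s)

theorem sq_causalConv_le (hw : ∀ k, 0 ≤ w k) (hC : ∀ n, ∑ k ∈ range n, w k ≤ C)
    (a : ℕ → ℝ) (t : ℕ) :
    causalConv w a t ^ 2 ≤ C * causalConv w (fun s => a s ^ 2) t := by
  have hCS := sum_sq_le_sum_mul_sum_of_sq_le_mul (range (t + 1))
    (r := fun s => w (t - s) * a s) (fun s _ => hw (t - s))
    (fun s _ => mul_nonneg (hw (t - s)) (sq_nonneg (a s))) (fun s _ => by ring_nf; rfl)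
  have hmass : ∑ s ∈ range (t + 1), w (t - s) ≤ C := by
    simpa using (sum_range_reflect w (t + 1)).trans_le (hC (t + 1))
  exact hCS.trans (mul_le_mul_of_nonneg_right hmass
    (sum_nonneg fun s _ => mul_nonneg (hw _) (sq_nonneg _)))

theorem sum_sq_causalConv_le (hw : ∀ k, 0 ≤ w k) (hC : ∀ n, ∑ k ∈ range n, w k ≤ C)
    (a : ℕ → ℝ) (N : ℕ) :
    ∑ t ∈ range N, causalConv w a t ^ 2 ≤ C ^ 2 * ∑ t ∈ range N, a t ^ 2 := by
  have hC0 : 0 ≤ C := by simpa using hC 0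
  calc ∑ t ∈ range N, causalConv w a t ^ 2
      ≤ ∑ t ∈ range N, C * causalConv w (fun s => a s ^ 2) t :=
        sum_le_sum fun t _ => sq_causalConv_le hw hC a t
    _ = C * ∑ t ∈ range N, causalConv w (fun s => a s ^ 2) t := (mul_sum ..).symm
    _ ≤ C * (C * ∑ t ∈ range N, a t ^ 2) :=
        mul_le_mul_of_nonneg_left
          (sum_range_causalConv_le hC (fun s => sq_nonneg (a s)) N) hC0
    _ = C ^ 2 * ∑ t ∈ range N, a t ^ 2 := by ring

end CausalConv

theorem norm_sum_smul_le_causalConv {E : Type*} [SeminormedAddCommGroup E] [NormedSpace ℝ E]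
    {w : ℕ → ℝ} (hw : ∀ k, 0 ≤ w k) (v : ℕ → E) (t : ℕ) :
    ‖∑ s ∈ range (t + 1), w (t - s) • v s‖ ≤ causalConv w (fun s => ‖v s‖) t := by
  refine (norm_sum_le _ _).trans_eq (sum_congr rfl fun s _ => ?_)
  rw [norm_smul, Real.norm_of_nonneg (hw _)]

theorem sum_range_pow_le_inv_one_sub {β : ℝ} (hβ0 : 0 ≤ β) (hβ1 : β < 1) (n : ℕ) :
    ∑ k ∈ range n, β ^ k ≤ (1 - β)⁻¹ := by
  have h := geom_sum_Ico_le_of_lt_one (m := 0) (n := n) hβ0 hβ1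
  rwa [← range_eq_Ico, pow_zero, one_div] at h

theorem norm_add_sq_le {E : Type*} [SeminormedAddCommGroup E] (x y : E) :
    ‖x + y‖ ^ 2 ≤ 2 * (‖x‖ ^ 2 + ‖y‖ ^ 2) :=
  (pow_le_pow_left₀ (norm_nonneg _) (norm_add_le x y) 2).trans add_sq_le

theorem sum_range_comp_sub_one_le_s11 {f : ℤ → ℝ} (hf : ∀ t, 0 ≤ f t) (hf₀ : f (-1) = 0) (N : ℕ) :
    ∑ t ∈ range N, f (t - 1) ≤ ∑ t ∈ range N, f t := by
  cases N with
  | zero => simp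
  | succ n =>
    rw [sum_range_succ', sum_range_succ]
    simpa [hf₀] using hf n

theorem sum_range_norm_sub_sq_le {E : Type*} [SeminormedAddCommGroup E] (δ : ℤ → E)
    (hδ : δ (-1) = 0) (N : ℕ) :
    ∑ t ∈ range N, ‖δ (t - 1) - δ t‖ ^ 2 ≤ 4 * ∑ t ∈ range N, ‖δ t‖ ^ 2 := by
  have hshift := sum_range_comp_sub_one_le_s11 (f := fun t => ‖δ t‖ ^ 2) (fun t => sq_nonneg _)
    (by simp [hδ]) N
  calc ∑ t ∈ range N, ‖δ (t - 1) - δ t‖ ^ 2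
      ≤ ∑ t ∈ range N, 2 * (‖δ (t - 1)‖ ^ 2 + ‖δ t‖ ^ 2) := by
        refine sum_le_sum fun t _ => ?_
        simpa [sub_eq_add_neg] using norm_add_sq_le (δ (t - 1)) (-δ t)
    _ = 2 * ∑ t ∈ range N, ‖δ (t - 1)‖ ^ 2 + 2 * ∑ t ∈ range N, ‖δ t‖ ^ 2 := by
        rw [← mul_sum, sum_add_distrib, mul_add, mul_sum, mul_sum]
    _ ≤ 4 * ∑ t ∈ range N, ‖δ t‖ ^ 2 := by linarith

/-- **Total squared momentum bound.** In a real normed vector space, if the momentum has the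
closed form `m_t = (1-β) ∑_{s=0}^t β^(t-s) g_s + ∑_{s=0}^t β^(t-s) (δ_{s-1} - δ_s)` with
`δ_{-1} = 0`, then `∑_{t=0}^T ‖m_t‖² ≤ 2 ∑_{t=0}^T ‖g_t‖² + (8/(1-β)²) ∑_{t=0}^T ‖δ_t‖²`. -/
theorem sum_sq_norm_momentum_le
    {E : Type*} [NormedAddCommGroup E] [NormedSpace ℝ E]
    (β : ℝ) (hβ0 : 0 ≤ β) (hβ1 : β < 1) (T : ℕ)
    (g m δ : ℤ → E) (hδ0 : δ (-1) = 0)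
    (hm : ∀ t : ℕ, t ≤ T →
      m t = (1 - β) • ∑ s ∈ range (t + 1), β ^ (t - s) • g (s : ℤ)
        + ∑ s ∈ range (t + 1), β ^ (t - s) • (δ ((s : ℤ) - 1) - δ (s : ℤ))) :
    ∑ t ∈ range (T + 1), ‖m (t : ℤ)‖ ^ 2
      ≤ 2 * ∑ t ∈ range (T + 1), ‖g (t : ℤ)‖ ^ 2
        + (8 / (1 - β) ^ 2) * ∑ t ∈ range (T + 1), ‖δ (t : ℤ)‖ ^ 2 := by
  have hβ : 0 < 1 - β := sub_pos.2 hβ1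
  have hw : ∀ k, 0 ≤ β ^ k := fun k => pow_nonneg hβ0 k
  have hC := sum_range_pow_le_inv_one_sub hβ0 hβ1
  set A := causalConv (β ^ ·) (fun s => ‖g s‖)
  set B := causalConv (β ^ ·) (fun s => ‖δ (s - 1) - δ s‖)
  have hmt : ∀ t ∈ range (T + 1), ‖m t‖ ^ 2 ≤ 2 * ((1 - β) ^ 2 * A t ^ 2 + B t ^ 2) := by
    intro t ht
    rw [hm t (Nat.lt_succ_iff.mp (mem_range.mp ht))]
    refine (norm_add_sq_le _ _).trans ?_
    rw [norm_smul, Real.norm_of_nonneg hβ.le, mul_pow]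
    gcongr <;> exact norm_sum_smul_le_causalConv hw _ t
  have hA := sum_sq_causalConv_le hw hC (fun s => ‖g s‖) (T + 1)
  have hB := sum_sq_causalConv_le hw hC (fun s => ‖δ (s - 1) - δ s‖) (T + 1)
  have hδ := sum_range_norm_sub_sq_le δ hδ0 (T + 1)
  calc ∑ t ∈ range (T + 1), ‖m t‖ ^ 2
      ≤ ∑ t ∈ range (T + 1), 2 * ((1 - β) ^ 2 * A t ^ 2 + B t ^ 2) := sum_le_sum hmt
    _ = 2 * (1 - β) ^ 2 * ∑ t ∈ range (T + 1), A t ^ 2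
          + 2 * ∑ t ∈ range (T + 1), B t ^ 2 := by
        simp only [mul_add, sum_add_distrib, mul_sum, mul_assoc]
    _ ≤ 2 * (1 - β) ^ 2 * ((1 - β)⁻¹ ^ 2 * ∑ t ∈ range (T + 1), ‖g t‖ ^ 2)
          + 2 * ((1 - β)⁻¹ ^ 2 * (4 * ∑ t ∈ range (T + 1), ‖δ t‖ ^ 2)) := by
        gcongr
        exact hB.trans (by gcongr)
    _ = _ := by field_simp; ring
end
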